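/- Let $\mu, c, g_0$ be real and let $y$ be a real-valued $2\pi$-periodic trigonometric polynomial. Then the quasiperiodic linearized Babenko operator $\hat S_{1,\mu}$ is self-adjoint with respect to the complex $L^2$ inner product: for all trigonometric polynomials $f$ and $g$, $\langle \hat S_{1,\mu} f, g\rangle = \langle f, \hat S_{1,\mu} g\rangle$, where $\langle f, g\rangle = \int_{-\pi}^{\pi} f(u)\,\overline{g(u)}\, du$. -/

import Mathlib

open MeasureTheory
open scoped Real

/-- A trigonometric polynomial `u ↦ ∑ₖ aₖ e^{iku}`, represented by its finitely supported
Fourier coefficients; multiplication of coefficients is convolution, which corresponds to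
pointwise multiplication of the associated functions. -/
abbrev TrigPoly : Type := AddMonoidAlgebra ℂ ℤ

/-- Evaluation of a trigonometric polynomial: `teval c u = ∑ k, c k * exp (i k u)`. -/
noncomputable def teval (c : TrigPoly) (u : ℝ) : ℂ :=
  Finsupp.sum c.coeff fun k a => a * Complex.exp (Complex.I * (k : ℂ) * (u : ℂ))

/-- The Fourier multiplier operator with symbol `m`. -/
noncomputable def mulOp (m : ℤ → ℂ) (c : TrigPoly) : TrigPoly :=
  AddMonoidAlgebra.ofCoeff (Finsupp.sum c.coeff fun k a => Finsupp.single k (m k * a))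

/-- The circular Hilbert transform `Ĥ e^{iku} = i sign(k) e^{iku}` (with `sign 0 = 0`). -/
noncomputable def Hop : TrigPoly → TrigPoly := mulOp fun k => Complex.I * (Int.sign k : ℂ)

/-- The operator `k̂ e^{iku} = |k| e^{iku}`. -/
noncomputable def Kop : TrigPoly → TrigPoly := mulOp fun k => ((|k| : ℤ) : ℂ)

/-- Differentiation `∂ᵤ e^{iku} = i k e^{iku}`. -/
noncomputable def Dop : TrigPoly → TrigPoly := mulOp fun k => Complex.I * (k : ℂ)

/-- A trigonometric polynomial is real-valued. -/
def RealValued (c : TrigPoly) : Prop := ∀ u : ℝ, (teval c u).im = 0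

/-- The quasiperiodic Hilbert transform `Ĥμ e^{iku} = i sign(k+μ) e^{iku}` (`sign 0 = 0`). -/
noncomputable def Hmu (μ : ℝ) : TrigPoly → TrigPoly :=
  mulOp fun k => Complex.I * ((Real.sign ((k : ℝ) + μ) : ℝ) : ℂ)

/-- The quasiperiodic multiplier operator `k̂μ e^{iku} = |k+μ| e^{iku}`. -/
noncomputable def Kmu (μ : ℝ) : TrigPoly → TrigPoly :=
  mulOp fun k => ((|(k : ℝ) + μ| : ℝ) : ℂ)

/-- The quasiperiodic linearized Babenko operator
`Ŝ₁μ f = (c²k̂μ - g₀)f - g₀[ y (k̂μ f) + f (k̂y) + k̂μ(yf) ]`. -/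
noncomputable def S1mu (μ c g0 : ℝ) (y f : TrigPoly) : TrigPoly :=
  (c ^ 2 : ℂ) • Kmu μ f - (g0 : ℂ) • f
    - (g0 : ℂ) • (y * Kmu μ f + f * Kop y + Kmu μ (y * f))

/-!
By Parseval, `∫_{-π}^{π} f ḡ = 2π ∑ₖ f̂ₖ conj ĝₖ`, so a Fourier multiplier with real symbol, such
as `k̂μ`, is symmetric. Multiplication by a real-valued function is symmetric pointwise, and `k̂ y`
is real-valued because its coefficients inherit the symmetry `conj ŷₖ = ŷ₋ₖ` of those of `y`.
Thus `Ŝ₁μ` is a real linear combination of symmetric operators and of `y k̂μ + k̂μ y`, which is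
symmetric because its two terms are adjoint to each other.
-/

open ComplexConjugate

noncomputable def expChar (u : ℝ) : Multiplicative ℤ →* ℂ where
  toFun k := Complex.exp (Complex.I * (k.toAdd : ℂ) * u)
  map_one' := by simp
  map_mul' k l := by
    simp only [toAdd_mul, Int.cast_add, ← Complex.exp_add]
    ring_nf

theorem teval_eq_lift (c : TrigPoly) (u : ℝ) :
    teval c u = AddMonoidAlgebra.lift ℂ ℂ ℤ (expChar u) c := by
  rw [AddMonoidAlgebra.lift_apply]
  rfl

theorem teval_add (a b : TrigPoly) (u : ℝ) : teval (a + b) u = teval a u + teval b u := by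
  simp only [teval_eq_lift, map_add]

theorem teval_smul (r : ℝ) (a : TrigPoly) (u : ℝ) : teval (r • a) u = r * teval a u := by
  simp only [teval_eq_lift, ← Complex.coe_smul, map_smul, smul_eq_mul]

theorem teval_mul (a b : TrigPoly) (u : ℝ) : teval (a * b) u = teval a u * teval b u := by
  simp only [teval_eq_lift, map_mul]

theorem teval_eq_sum (c : TrigPoly) {s : Finset ℤ} (hs : c.coeff.support ⊆ s) (u : ℝ) :
    teval c u = ∑ k ∈ s, c.coeff k * Complex.exp (Complex.I * k * u) := by
  rw [teval, Finsupp.sum]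
  exact Finset.sum_subset hs fun k _ hk => by simp [Finsupp.notMem_support_iff.mp hk]

theorem continuous_teval (c : TrigPoly) : Continuous (teval c) := by
  unfold teval Finsupp.sum
  fun_prop

theorem intervalIntegrable_teval_mul_conj (f g : TrigPoly) (a b : ℝ) :
    IntervalIntegrable (fun u => teval f u * conj (teval g u)) volume a b :=
  ((continuous_teval f).mul
    (Complex.continuous_conj.comp (continuous_teval g))).intervalIntegrable _ _

/-- `ℝ`-bilinear rather than `ℂ`-sesquilinear, so that `LinearMap.IsAdjointPair.sub` and `.smul`,
which Mathlib states for bilinear forms, apply. -/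
noncomputable def l2Form : TrigPoly →ₗ[ℝ] TrigPoly →ₗ[ℝ] ℂ :=
  LinearMap.mk₂ ℝ (fun f g => ∫ u in (-π)..π, teval f u * conj (teval g u))
    (fun f f' g => by
      simp only [teval_add, add_mul]
      exact intervalIntegral.integral_add (intervalIntegrable_teval_mul_conj _ _ _ _)
        (intervalIntegrable_teval_mul_conj _ _ _ _))
    (fun r f g => by
      simp only [teval_smul, mul_assoc, intervalIntegral.integral_const_mul, Complex.real_smul])
    (fun f g g' => by
      simp only [teval_add, map_add, mul_add]
      exact intervalIntegral.integral_add (intervalIntegrable_teval_mul_conj _ _ _ _)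
        (intervalIntegrable_teval_mul_conj _ _ _ _))
    (fun r f g => by
      simp only [teval_smul, map_mul, Complex.conj_ofReal, mul_left_comm _ (r : ℂ),
        intervalIntegral.integral_const_mul, Complex.real_smul])

theorem l2Form_apply (f g : TrigPoly) :
    l2Form f g = ∫ u in (-π)..π, teval f u * conj (teval g u) := rfl

theorem integral_exp_I_mul_int_mul (k : ℤ) :
    ∫ u in (-π)..π, Complex.exp (Complex.I * k * u) = if k = 0 then 2 * (π : ℂ) else 0 := by
  rcases eq_or_ne k 0 with rfl | hk
  · simp; ring
  have hc : Complex.I * k ≠ 0 := mul_ne_zero Complex.I_ne_zero (by exact_mod_cast hk)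
  have hperiodic : Complex.exp (Complex.I * k * π) = Complex.exp (Complex.I * k * (-π : ℝ)) := by
    rw [show Complex.I * k * π = Complex.I * k * (-π : ℝ) + k * (2 * π * Complex.I) by
      push_cast; ring, Complex.exp_add, Complex.exp_int_mul_two_pi_mul_I, mul_one]
  rw [if_neg hk, integral_exp_mul_complex hc, hperiodic, sub_self, zero_div]

theorem integral_exp_mul_conj_exp (k l : ℤ) :
    ∫ u in (-π)..π, Complex.exp (Complex.I * k * u) * conj (Complex.exp (Complex.I * l * u))
      = if k = l then 2 * (π : ℂ) else 0 := by
  have hexp : ∀ u : ℝ, Complex.exp (Complex.I * k * u) * conj (Complex.exp (Complex.I * l * u))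
      = Complex.exp (Complex.I * ((k - l : ℤ) : ℂ) * u) := fun u => by
    rw [← Complex.exp_conj, ← Complex.exp_add]
    simp only [map_mul, Complex.conj_I, Complex.conj_ofReal, map_intCast]
    push_cast
    ring_nf
  simp only [hexp, integral_exp_I_mul_int_mul, sub_eq_zero]

theorem l2Form_eq_sum (f g : TrigPoly) {s : Finset ℤ}
    (hf : f.coeff.support ⊆ s) (hg : g.coeff.support ⊆ s) :
    l2Form f g = 2 * (π : ℂ) * ∑ k ∈ s, f.coeff k * conj (g.coeff k) := by
  have hcont : ∀ k l : ℤ, Continuous fun u : ℝ => f.coeff k * conj (g.coeff l) *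
      (Complex.exp (Complex.I * k * u) * conj (Complex.exp (Complex.I * l * u))) := by
    fun_prop
  have hexpand : ∀ u, teval f u * conj (teval g u) =
      ∑ k ∈ s, ∑ l ∈ s, f.coeff k * conj (g.coeff l) *
        (Complex.exp (Complex.I * k * u) * conj (Complex.exp (Complex.I * l * u))) := fun u => by
    rw [teval_eq_sum f hf, teval_eq_sum g hg, map_sum, Finset.sum_mul_sum]
    refine Finset.sum_congr rfl fun k _ => Finset.sum_congr rfl fun l _ => ?_
    rw [map_mul]
    ring
  simp only [l2Form_apply, hexpand]
  rw [intervalIntegral.integral_finsetSum fun k _ =>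
    (continuous_finsetSum _ fun l _ => hcont k l).intervalIntegrable _ _, Finset.mul_sum]
  refine Finset.sum_congr rfl fun k hk => ?_
  simp only [intervalIntegral.integral_finsetSum fun l _ => (hcont k l).intervalIntegrable _ _,
    intervalIntegral.integral_const_mul, integral_exp_mul_conj_exp, mul_ite, mul_zero,
    Finset.sum_ite_eq, if_pos hk]
  ring

theorem l2Form_single_one (c : TrigPoly) (k : ℤ) :
    l2Form c (AddMonoidAlgebra.single k 1) = 2 * (π : ℂ) * c.coeff k := by
  rw [l2Form_eq_sum c _ (s := insert k c.coeff.support) (Finset.subset_insert k _)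
    (by rw [AddMonoidAlgebra.coeff_single]; exact Finsupp.support_single_subset.trans (by simp))]
  simp [apply_ite conj]

theorem teval_injective : Function.Injective teval := fun c d h => by
  ext k
  have hk := l2Form_single_one c k
  rw [l2Form_apply, h, ← l2Form_apply, l2Form_single_one] at hk
  exact (mul_left_cancel₀ (by simp [Real.pi_ne_zero]) hk).symm

theorem coeff_mulOp (m : ℤ → ℂ) (c : TrigPoly) (k : ℤ) :
    (mulOp m c).coeff k = m k * c.coeff k := by
  rw [mulOp, AddMonoidAlgebra.coeff_ofCoeff, Finsupp.sum_apply, Finsupp.sum,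
    Finset.sum_eq_single k (fun j _ hj => Finsupp.single_eq_of_ne' hj)
      (fun hk => by simp [Finsupp.notMem_support_iff.mp hk]), Finsupp.single_eq_same]

theorem support_coeff_mulOp_subset (m : ℤ → ℂ) (c : TrigPoly) :
    (mulOp m c).coeff.support ⊆ c.coeff.support := fun k => by
  simp only [Finsupp.mem_support_iff, coeff_mulOp]
  exact right_ne_zero_of_mul

noncomputable def conjReflect (c : TrigPoly) : TrigPoly :=
  AddMonoidAlgebra.ofCoeff ((c.coeff.mapRange conj (map_zero _)).equivMapDomain (Equiv.neg ℤ))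

theorem coeff_conjReflect (c : TrigPoly) (k : ℤ) :
    (conjReflect c).coeff k = conj (c.coeff (-k)) := by
  simp [conjReflect, Finsupp.equivMapDomain_apply]

theorem teval_conjReflect (c : TrigPoly) (u : ℝ) :
    teval (conjReflect c) u = conj (teval c u) := by
  rw [teval, conjReflect, AddMonoidAlgebra.coeff_ofCoeff, Finsupp.sum_equivMapDomain,
    Finsupp.sum_mapRange_index fun _ => zero_mul _]
  simp only [teval, Finsupp.sum, map_sum, map_mul, ← Complex.exp_conj, Complex.conj_I,
    Complex.conj_ofReal, map_intCast, Equiv.neg_apply, Int.cast_neg]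
  refine Finset.sum_congr rfl fun k _ => ?_
  ring_nf

theorem realValued_iff_conjReflect_eq {c : TrigPoly} : RealValued c ↔ conjReflect c = c := by
  refine ⟨fun hc => teval_injective (funext fun u => ?_), fun hc u => ?_⟩
  · rw [teval_conjReflect, Complex.conj_eq_iff_im.mpr (hc u)]
  · rw [← Complex.conj_eq_iff_im, ← teval_conjReflect, hc]

theorem conjReflect_mulOp {m : ℤ → ℂ} (hm : ∀ k, m (-k) = conj (m k)) (c : TrigPoly) :
    conjReflect (mulOp m c) = mulOp m (conjReflect c) := by
  ext k
  rw [coeff_conjReflect, coeff_mulOp, coeff_mulOp, coeff_conjReflect, map_mul, ← hm, neg_neg]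

theorem realValued_mulOp {m : ℤ → ℂ} (hm : ∀ k, m (-k) = conj (m k)) {c : TrigPoly}
    (hc : RealValued c) : RealValued (mulOp m c) := by
  rw [realValued_iff_conjReflect_eq] at hc ⊢
  rw [conjReflect_mulOp hm, hc]

theorem realValued_Kop {y : TrigPoly} (hy : RealValued y) : RealValued (Kop y) :=
  realValued_mulOp (fun k => by rw [abs_neg, map_intCast]) hy

theorem isAdjointPair_mulOp {m : ℤ → ℂ} (hm : ∀ k, conj (m k) = m k) :
    l2Form.IsAdjointPair l2Form (mulOp m) (mulOp m) := fun f g => by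
  rw [l2Form_eq_sum _ _ ((support_coeff_mulOp_subset m f).trans Finset.subset_union_left)
      Finset.subset_union_right,
    l2Form_eq_sum _ _ Finset.subset_union_left
      ((support_coeff_mulOp_subset m g).trans Finset.subset_union_right)]
  refine congrArg _ (Finset.sum_congr rfl fun k _ => ?_)
  rw [coeff_mulOp, coeff_mulOp, map_mul, hm]
  ring

theorem isAdjointPair_mul_left {z : TrigPoly} (hz : RealValued z) :
    l2Form.IsAdjointPair l2Form (z * ·) (z * ·) := fun f g =>
  intervalIntegral.integral_congr fun u _ => by
    simp only [teval_mul, map_mul, Complex.conj_eq_iff_im.mpr (hz u)]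
    ring

theorem S1mu_eq (μ c g0 : ℝ) (y : TrigPoly) :
    S1mu μ c g0 y = c ^ 2 • Kmu μ - g0 • id
      - g0 • ((Kop y * ·) + ((y * ·) ∘ Kmu μ + Kmu μ ∘ (y * ·))) := by
  funext f
  simp only [S1mu, Pi.sub_apply, Pi.add_apply, Pi.smul_apply, Function.comp_apply, id,
    ← Complex.coe_smul, Complex.ofReal_pow, mul_comm f]
  rw [add_comm (y * _), add_assoc]

/-- For real μ, c, g₀ and a real-valued 2π-periodic trigonometric polynomial y, the
quasiperiodic linearized Babenko operator Ŝ₁μ is self-adjoint with respect to the complex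
L² inner product `⟪f, g⟫ = ∫ f ḡ du`: `⟪Ŝ₁μ f, g⟫ = ⟪f, Ŝ₁μ g⟫` for all trigonometric
polynomials f, g. -/
theorem S1mu_self_adjoint (μ c g0 : ℝ) (y : TrigPoly) (hy : RealValued y)
    (f g : TrigPoly) :
    ∫ u in (-π)..π, teval (S1mu μ c g0 y f) u * starRingEnd ℂ (teval g u)
      = ∫ u in (-π)..π, teval f u * starRingEnd ℂ (teval (S1mu μ c g0 y g) u) := by
  have hK : l2Form.IsAdjointPair l2Form (Kmu μ) (Kmu μ) :=
    isAdjointPair_mulOp fun _ => Complex.conj_ofReal _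
  have hy' := isAdjointPair_mul_left hy
  have hsym : l2Form.IsAdjointPair l2Form ((y * ·) ∘ Kmu μ + Kmu μ ∘ (y * ·))
      ((y * ·) ∘ Kmu μ + Kmu μ ∘ (y * ·)) := by
    simpa only [add_comm] using (hK.comp hy').add (hy'.comp hK)
  have hS : l2Form.IsAdjointPair l2Form (S1mu μ c g0 y) (S1mu μ c g0 y) := by
    rw [S1mu_eq]
    exact ((hK.smul _).sub (LinearMap.isAdjointPair_id.smul _)).sub
      (((isAdjointPair_mul_left (realValued_Kop hy)).add hsym).smul _)
  exact hS f g
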